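/- Let c < 0 with κ = −c and σ > 0 be fixed. Let vol_H denote the measure on D_c^p with density (2/(1 − κ‖y‖²))^p with respect to Lebesgue measure, and let X₁, X₂, … be i.i.d. random points of D_c^p whose common law has a continuous bounded density f with respect to vol_H, supported in a compact subset of D_c^p. Define the kernel K_σ(x,y) = exp(−d_H(x,y)²/(2σ²)), the empirical estimate f̂_σ^N(x) = (1/N) Σ_{i=1}^N K_σ(x,X_i), and the population smoothed density f_σ(x) = ∫_{D_c^p} K_σ(x,y) f(y) dvol_H(y). Then sup_{x ∈ D_c^p} |f̂_σ^N(x) − f_σ(x)| → 0 almost surely as N → ∞. -/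

import Mathlib

open scoped BigOperators InnerProductSpace RealInnerProductSpace
open Filter MeasureTheory
open scoped ProbabilityTheory
attribute [local instance] Classical.propDecidable

noncomputable section

/-- Inverse hyperbolic tangent. -/
def artanh (x : ℝ) : ℝ := (1 / 2) * Real.log ((1 + x) / (1 - x))

/-- Inverse hyperbolic cosine. -/
def arcosh (x : ℝ) : ℝ := Real.log (x + Real.sqrt (x ^ 2 - 1))

/-- The Poincaré ball of curvature `c < 0` in dimension `p`. -/
def Dball (c : ℝ) (p : ℕ) : Set (EuclideanSpace ℝ (Fin p)) :=
  {v | -c * ‖v‖ ^ 2 < 1}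

/-- Möbius (gyrovector) addition with curvature parameter `c`. -/
def mobiusAdd (c : ℝ) {p : ℕ} (v w : EuclideanSpace ℝ (Fin p)) :
    EuclideanSpace ℝ (Fin p) :=
  (1 - 2 * c * ⟪v, w⟫_ℝ + c ^ 2 * ‖v‖ ^ 2 * ‖w‖ ^ 2)⁻¹ •
    ((1 - 2 * c * ⟪v, w⟫_ℝ - c * ‖w‖ ^ 2) • v + (1 + c * ‖v‖ ^ 2) • w)

/-- Möbius scalar multiplication with curvature parameter `c`. -/
def mobiusSmul (c lam : ℝ) {p : ℕ} (v : EuclideanSpace ℝ (Fin p)) :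
    EuclideanSpace ℝ (Fin p) :=
  if v = 0 then 0 else
    ((1 / Real.sqrt (-c)) * Real.tanh (lam * artanh (Real.sqrt (-c) * ‖v‖)) * ‖v‖⁻¹) • v

/-- Hyperbolic (Poincaré ball) distance. -/
def dH (c : ℝ) {p : ℕ} (x y : EuclideanSpace ℝ (Fin p)) : ℝ :=
  (2 / Real.sqrt (-c)) * artanh (Real.sqrt (-c) * ‖mobiusAdd c (-x) y‖)

/-- Conformal factor `λ_x = 2 / (1 - κ‖x‖²)`, `κ = -c`. -/
def conf (c : ℝ) {p : ℕ} (x : EuclideanSpace ℝ (Fin p)) : ℝ :=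
  2 / (1 - (-c) * ‖x‖ ^ 2)

/-- Riemannian exponential map of the Poincaré ball at `x`. -/
def expMap (c : ℝ) {p : ℕ} (x v : EuclideanSpace ℝ (Fin p)) :
    EuclideanSpace ℝ (Fin p) :=
  if v = 0 then x else
    mobiusAdd c x
      ((Real.tanh (conf c x * Real.sqrt (-c) * ‖v‖ / 2) / (Real.sqrt (-c) * ‖v‖)) • v)

/-- Riemannian logarithmic map of the Poincaré ball at `x`. -/
def logMap (c : ℝ) {p : ℕ} (x y : EuclideanSpace ℝ (Fin p)) :
    EuclideanSpace ℝ (Fin p) :=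
  if y = x then 0 else
    ((2 / conf c x) * (artanh (Real.sqrt (-c) * ‖mobiusAdd c (-x) y‖) / ‖mobiusAdd c (-x) y‖)) •
      mobiusAdd c (-x) y

/-- The Möbius weighted mean `⊕_j (w_j ⊗_c x_j)` (iterated Möbius sum). -/
def mobiusMean (c : ℝ) {p N : ℕ} (w : Fin N → ℝ) (x : Fin N → EuclideanSpace ℝ (Fin p)) :
    EuclideanSpace ℝ (Fin p) :=
  (List.ofFn fun j => mobiusSmul c (w j) (x j)).foldl (mobiusAdd c) 0

/-- Geodesic convexity in the Poincaré ball. -/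
def GeodesicConvex (c : ℝ) {p : ℕ} (U : Set (EuclideanSpace ℝ (Fin p))) : Prop :=
  ∀ x ∈ U, ∀ y ∈ U, ∀ t ∈ Set.Icc (0 : ℝ) 1, expMap c x (t • logMap c x y) ∈ U

/-- The Riemannian gradient on the Poincaré ball. -/
def gradH (c : ℝ) {p : ℕ} (f : EuclideanSpace ℝ (Fin p) → ℝ) (x : EuclideanSpace ℝ (Fin p)) :
    EuclideanSpace ℝ (Fin p) :=
  ((1 - (-c) * ‖x‖ ^ 2) ^ 2 / 4) • gradient f x

/-- The hyperbolic volume measure on `ℝ^p` (density of the Poincaré metric). -/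
def volH (c : ℝ) (p : ℕ) : Measure (EuclideanSpace ℝ (Fin p)) :=
  volume.withDensity fun y => ENNReal.ofReal ((2 / (1 - (-c) * ‖y‖ ^ 2)) ^ p)

/-- Gaussian kernel on the Poincaré ball. -/
def kernelK (c σ : ℝ) {p : ℕ} (x y : EuclideanSpace ℝ (Fin p)) : ℝ :=
  Real.exp (-(dH c x y) ^ 2 / (2 * σ ^ 2))

/-- Normalized Gaussian mean-shift weights relative to data `xt` at query point `x`. -/
def msWeight (c σ : ℝ) {p N : ℕ} (xt : Fin N → EuclideanSpace ℝ (Fin p))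
    (x : EuclideanSpace ℝ (Fin p)) (j : Fin N) : ℝ :=
  kernelK c σ x (xt j) / ∑ k, kernelK c σ x (xt k)

/-- One HypeGBMS (Möbius weighted mean) update. -/
def msUpdate (c σ : ℝ) {p N : ℕ} (xt : Fin N → EuclideanSpace ℝ (Fin p))
    (x : EuclideanSpace ℝ (Fin p)) : EuclideanSpace ℝ (Fin p) :=
  mobiusMean c (msWeight c σ xt x) xt

/-- Kernel density estimate `f̂` based on the fixed data `xt`. -/
def kdeFin (c σ : ℝ) {p N : ℕ} (xt : Fin N → EuclideanSpace ℝ (Fin p))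
    (x : EuclideanSpace ℝ (Fin p)) : ℝ :=
  (1 / (N : ℝ)) * ∑ j, kernelK c σ x (xt j)

/-- Population smoothed density `f_σ`. -/
def popSmooth (c σ : ℝ) {p : ℕ} (f : EuclideanSpace ℝ (Fin p) → ℝ)
    (x : EuclideanSpace ℝ (Fin p)) : ℝ :=
  ∫ y, kernelK c σ x y * f y ∂(volH c p)

/-- Empirical kernel density estimate from random samples `X`. -/
def empKDE (c σ : ℝ) {p : ℕ} {Ω : Type*} (X : ℕ → Ω → EuclideanSpace ℝ (Fin p))
    (N : ℕ) (ω : Ω) (x : EuclideanSpace ℝ (Fin p)) : ℝ :=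
  (1 / (N : ℝ)) * ∑ i ∈ Finset.range N, kernelK c σ x (X i ω)

/-- Set of (Euclidean) critical points of `g` inside `U`. -/
def critSet {p : ℕ} (g : EuclideanSpace ℝ (Fin p) → ℝ)
    (U : Set (EuclideanSpace ℝ (Fin p))) : Set (EuclideanSpace ℝ (Fin p)) :=
  {x ∈ U | gradient g x = 0}

/-- Hausdorff distance between two subsets of the Poincaré ball w.r.t. `dH`. -/
def hausdH (c : ℝ) {p : ℕ} (A B : Set (EuclideanSpace ℝ (Fin p))) : ℝ :=
  max (⨆ a ∈ A, ⨅ b ∈ B, dH c a b) (⨆ b ∈ B, ⨅ a ∈ A, dH c a b)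

/-- The comparison function `g_c(s) = √κ s coth(√κ s)`, with `g_c(0) = 1`. -/
def gcomp (c : ℝ) (s : ℝ) : ℝ :=
  if s = 0 then 1
  else Real.sqrt (-c) * s * (Real.cosh (Real.sqrt (-c) * s) / Real.sinh (Real.sqrt (-c) * s))
lemma mobius_norm_sq (c : ℝ) {p : ℕ} (v w : EuclideanSpace ℝ (Fin p))
    (hD : 1 - 2 * c * ⟪v, w⟫_ℝ + c ^ 2 * ‖v‖ ^ 2 * ‖w‖ ^ 2 ≠ 0) :
    1 + c * ‖mobiusAdd c v w‖ ^ 2 =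
      (1 + c * ‖v‖ ^ 2) * (1 + c * ‖w‖ ^ 2) /
        (1 - 2 * c * ⟪v, w⟫_ℝ + c ^ 2 * ‖v‖ ^ 2 * ‖w‖ ^ 2) := by
  set t := ⟪v, w⟫_ℝ with ht
  set D := 1 - 2 * c * t + c ^ 2 * ‖v‖ ^ 2 * ‖w‖ ^ 2 with hDdef
  set A := 1 - 2 * c * t - c * ‖w‖ ^ 2 with hA
  set B := 1 + c * ‖v‖ ^ 2 with hB
  have hnorm : ‖mobiusAdd c v w‖ ^ 2 = (D⁻¹) ^ 2 * ‖A • v + B • w‖ ^ 2 := by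
    rw [mobiusAdd, norm_smul, mul_pow, norm_inv, Real.norm_eq_abs, ← ht, ← hDdef, ← hA, ← hB,
      inv_pow, inv_pow, sq_abs]
  have hexp : ‖A • v + B • w‖ ^ 2 = A^2 * ‖v‖^2 + 2 * (A * B * t) + B^2 * ‖w‖^2 := by
    rw [@norm_add_sq_real, real_inner_smul_left, real_inner_smul_right]
    rw [norm_smul, norm_smul, mul_pow, mul_pow, Real.norm_eq_abs, Real.norm_eq_abs, sq_abs, sq_abs]
    ring
  rw [hnorm, hexp]
  field_simp
  ring

section lems
variable {p : ℕ} {c : ℝ}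

lemma denom_pos (hc : c < 0) {v w : EuclideanSpace ℝ (Fin p)}
    (hv : -c * ‖v‖ ^ 2 < 1) (hw : -c * ‖w‖ ^ 2 < 1) :
    0 < 1 - 2 * c * ⟪v, w⟫_ℝ + c ^ 2 * ‖v‖ ^ 2 * ‖w‖ ^ 2 := by
  have h1 : |⟪v, w⟫_ℝ| ≤ ‖v‖ * ‖w‖ := abs_real_inner_le_norm v w
  have h2 : (-c) * (‖v‖ * ‖w‖) < 1 := by
    have h3 : ((-c) * (‖v‖ * ‖w‖)) ^ 2 = ((-c) * ‖v‖ ^ 2) * ((-c) * ‖w‖ ^ 2) := by ring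
    nlinarith [mul_nonneg (mul_nonneg (neg_nonneg.2 hc.le) (norm_nonneg v)) (norm_nonneg w),
      mul_nonneg (neg_nonneg.2 hc.le) (sq_nonneg ‖v‖),
      mul_nonneg (neg_nonneg.2 hc.le) (sq_nonneg ‖w‖)]
  have habs := abs_le.1 h1
  have hq : 0 < 1 + c * (‖v‖ * ‖w‖) := by nlinarith
  nlinarith [pow_pos hq 2,
    mul_nonneg (neg_nonneg.2 hc.le) (by linarith [habs.1] : (0:ℝ) ≤ ⟪v, w⟫_ℝ + ‖v‖ * ‖w‖)]

lemma one_add_mul_norm_pos {v : EuclideanSpace ℝ (Fin p)} (hv : v ∈ Dball c p) :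
    0 < 1 + c * ‖v‖ ^ 2 := by
  have : -c * ‖v‖ ^ 2 < 1 := hv
  linarith

lemma mobius_mem_ball (hc : c < 0) {v w : EuclideanSpace ℝ (Fin p)}
    (hv : v ∈ Dball c p) (hw : w ∈ Dball c p) : mobiusAdd c v w ∈ Dball c p := by
  have hv' : -c * ‖v‖ ^ 2 < 1 := hv
  have hw' : -c * ‖w‖ ^ 2 < 1 := hw
  have hD := denom_pos hc hv' hw'
  have h := mobius_norm_sq c v w hD.ne'
  have hpos : 0 < (1 + c * ‖v‖ ^ 2) * (1 + c * ‖w‖ ^ 2) /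
      (1 - 2 * c * ⟪v, w⟫_ℝ + c ^ 2 * ‖v‖ ^ 2 * ‖w‖ ^ 2) :=
    div_pos (mul_pos (one_add_mul_norm_pos hv) (one_add_mul_norm_pos hw)) hD
  have : 0 < 1 + c * ‖mobiusAdd c v w‖ ^ 2 := h ▸ hpos
  show -c * ‖mobiusAdd c v w‖ ^ 2 < 1
  linarith

lemma sqrt_norm_lt_one (hc : c < 0) {v : EuclideanSpace ℝ (Fin p)} (hv : v ∈ Dball c p) :
    Real.sqrt (-c) * ‖v‖ < 1 := by
  have hv' : -c * ‖v‖ ^ 2 < 1 := hv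
  have h1 : (Real.sqrt (-c) * ‖v‖) ^ 2 = (-c) * ‖v‖ ^ 2 := by
    rw [mul_pow, Real.sq_sqrt (by linarith : (0:ℝ) ≤ -c)]
  nlinarith [mul_nonneg (Real.sqrt_nonneg (-c)) (norm_nonneg v)]

end lems

section lems2
variable {p : ℕ} {c : ℝ}

lemma artanh_nonneg {z : ℝ} (h0 : 0 ≤ z) (h1 : z < 1) : 0 ≤ artanh z := by
  have : (1:ℝ) ≤ (1 + z) / (1 - z) := by
    rw [le_div_iff₀ (by linarith)]; linarith
  have := Real.log_nonneg this
  unfold artanh; linarith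

lemma dH_nonneg (hc : c < 0) {x y : EuclideanSpace ℝ (Fin p)}
    (hx : x ∈ Dball c p) (hy : y ∈ Dball c p) : 0 ≤ dH c x y := by
  have hs : 0 < Real.sqrt (-c) := Real.sqrt_pos.2 (by linarith)
  have hxm : -x ∈ Dball c p := by show -c * ‖-x‖^2 < 1; rwa [norm_neg]
  have hm := mobius_mem_ball hc hxm hy
  have hz1 : Real.sqrt (-c) * ‖mobiusAdd c (-x) y‖ < 1 := sqrt_norm_lt_one hc hm
  have hz0 : 0 ≤ Real.sqrt (-c) * ‖mobiusAdd c (-x) y‖ :=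
    mul_nonneg hs.le (norm_nonneg _)
  exact mul_nonneg (by positivity) (artanh_nonneg hz0 hz1)

lemma kernelK_le_one {σ : ℝ} (hσ : 0 < σ) (x y : EuclideanSpace ℝ (Fin p)) :
    kernelK c σ x y ≤ 1 := by
  rw [kernelK, ← Real.exp_zero]
  apply Real.exp_le_exp.2
  apply div_nonpos_of_nonpos_of_nonneg
  · simp [sq_nonneg]
  · positivity

lemma kernelK_nonneg (σ : ℝ) (x y : EuclideanSpace ℝ (Fin p)) : 0 ≤ kernelK c σ x y :=
  (Real.exp_pos _).le

/-- lower bound on artanh via `1 - z²`. -/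
lemma artanh_ge {z : ℝ} (h0 : 0 ≤ z) (h1 : z < 1) :
    (1/2) * Real.log (1 / (1 - z ^ 2)) ≤ artanh z := by
  have hz : (0:ℝ) < 1 - z := by linarith
  have hz2 : (0:ℝ) < 1 - z ^ 2 := by nlinarith
  have hle : 1 / (1 - z ^ 2) ≤ (1 + z) / (1 - z) := by
    rw [div_le_div_iff₀ hz2 hz]
    nlinarith
  have := Real.log_le_log (by positivity) hle
  unfold artanh; linarith

/-- Decay of the kernel far from a compact set: quantitative form. -/
lemma dH_lower (hc : c < 0) {x y : EuclideanSpace ℝ (Fin p)}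
    (hx : x ∈ Dball c p) (hy : y ∈ Dball c p) :
    (1 / Real.sqrt (-c)) * Real.log (1 / (1 + c * ‖mobiusAdd c (-x) y‖ ^ 2)) ≤ dH c x y := by
  have hs : 0 < Real.sqrt (-c) := Real.sqrt_pos.2 (by linarith)
  have hxm : -x ∈ Dball c p := by show -c * ‖-x‖^2 < 1; rwa [norm_neg]
  have hm := mobius_mem_ball hc hxm hy
  have hz1 : Real.sqrt (-c) * ‖mobiusAdd c (-x) y‖ < 1 := sqrt_norm_lt_one hc hm
  have hz0 : 0 ≤ Real.sqrt (-c) * ‖mobiusAdd c (-x) y‖ :=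
    mul_nonneg hs.le (norm_nonneg _)
  have hzsq : (Real.sqrt (-c) * ‖mobiusAdd c (-x) y‖) ^ 2 = -c * ‖mobiusAdd c (-x) y‖ ^ 2 := by
    rw [mul_pow, Real.sq_sqrt (by linarith : (0:ℝ) ≤ -c)]
  have h := artanh_ge hz0 hz1
  rw [hzsq] at h
  have h2 : 1 - -c * ‖mobiusAdd c (-x) y‖ ^ 2 = 1 + c * ‖mobiusAdd c (-x) y‖ ^ 2 := by ring
  rw [h2] at h
  unfold dH
  rw [div_mul_eq_mul_div, div_mul_eq_mul_div]
  apply div_le_div_of_nonneg_right ?_ hs.le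
  linarith

end lems2

section lems3
variable {p : ℕ} {c : ℝ}

lemma measurable_artanh : Measurable artanh := by
  unfold artanh
  exact (Real.measurable_log.comp
    (((measurable_const.add measurable_id).div (measurable_const.sub measurable_id)))).const_mul _

lemma measurable_kernelK (σ : ℝ) (x : EuclideanSpace ℝ (Fin p)) :
    Measurable (fun y => kernelK c σ x y) := by
  have hd : Continuous (fun y : EuclideanSpace ℝ (Fin p) =>
      1 - 2 * c * ⟪-x, y⟫_ℝ + c ^ 2 * ‖(-x : EuclideanSpace ℝ (Fin p))‖ ^ 2 * ‖y‖ ^ 2) := by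
    have hinner : Continuous fun y : EuclideanSpace ℝ (Fin p) => ⟪-x, y⟫_ℝ :=
      Continuous.inner continuous_const continuous_id
    have h2 : Continuous fun y : EuclideanSpace ℝ (Fin p) => ‖y‖ ^ 2 := continuous_norm.pow 2
    exact (continuous_const.sub (continuous_const.mul hinner)).add (continuous_const.mul h2)
  have hu : Continuous (fun y : EuclideanSpace ℝ (Fin p) =>
      (1 - 2 * c * ⟪-x, y⟫_ℝ - c * ‖y‖ ^ 2) • (-x : EuclideanSpace ℝ (Fin p)) +
        (1 + c * ‖(-x : EuclideanSpace ℝ (Fin p))‖ ^ 2) • y) := by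
    have hinner : Continuous fun y : EuclideanSpace ℝ (Fin p) => ⟪-x, y⟫_ℝ :=
      Continuous.inner continuous_const continuous_id
    have h2 : Continuous fun y : EuclideanSpace ℝ (Fin p) => ‖y‖ ^ 2 := continuous_norm.pow 2
    exact (((continuous_const.sub (continuous_const.mul hinner)).sub
      (continuous_const.mul h2)).smul continuous_const).add (continuous_const_smul _)
  have hm : Measurable (fun y => mobiusAdd c (-x) y) := by
    unfold mobiusAdd
    exact (hd.measurable.inv).smul hu.measurable
  have hz : Measurable (fun y => Real.sqrt (-c) * ‖mobiusAdd c (-x) y‖) :=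
    (hm.norm).const_mul _
  have hdH : Measurable (fun y => dH c x y) := by
    unfold dH
    exact (measurable_artanh.comp hz).const_mul _
  unfold kernelK
  exact Real.continuous_exp.measurable.comp ((hdH.pow measurable_const).neg.div measurable_const)

end lems3

section lems4
variable {p : ℕ} {c : ℝ}

lemma continuousOn_kernelK (hc : c < 0) {σ : ℝ} (hσ : 0 < σ) :
    ContinuousOn (fun q : EuclideanSpace ℝ (Fin p) × EuclideanSpace ℝ (Fin p) =>
      kernelK c σ q.1 q.2) (Dball c p ×ˢ Dball c p) := by
  intro q hq
  obtain ⟨hx, hy⟩ := hq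
  apply ContinuousAt.continuousWithinAt
  have hxm : -q.1 ∈ Dball c p := by show -c * ‖-q.1‖ ^ 2 < 1; rw [norm_neg]; exact hx
  have hinner : Continuous fun r : EuclideanSpace ℝ (Fin p) × EuclideanSpace ℝ (Fin p) =>
      ⟪-r.1, r.2⟫_ℝ := Continuous.inner continuous_fst.neg continuous_snd
  have hn1 : Continuous fun r : EuclideanSpace ℝ (Fin p) × EuclideanSpace ℝ (Fin p) =>
      ‖(-r.1 : EuclideanSpace ℝ (Fin p))‖ ^ 2 := (continuous_fst.neg.norm).pow 2
  have hn2 : Continuous fun r : EuclideanSpace ℝ (Fin p) × EuclideanSpace ℝ (Fin p) =>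
      ‖r.2‖ ^ 2 := (continuous_snd.norm).pow 2
  have hd : Continuous fun r : EuclideanSpace ℝ (Fin p) × EuclideanSpace ℝ (Fin p) =>
      1 - 2 * c * ⟪-r.1, r.2⟫_ℝ + c ^ 2 * ‖(-r.1 : EuclideanSpace ℝ (Fin p))‖ ^ 2 * ‖r.2‖ ^ 2 :=
    (continuous_const.sub (continuous_const.mul hinner)).add
      ((continuous_const.mul hn1).mul hn2)
  have hd0 : 0 < 1 - 2 * c * ⟪-q.1, q.2⟫_ℝ +
      c ^ 2 * ‖(-q.1 : EuclideanSpace ℝ (Fin p))‖ ^ 2 * ‖q.2‖ ^ 2 :=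
    denom_pos hc hxm hy
  have hu : Continuous fun r : EuclideanSpace ℝ (Fin p) × EuclideanSpace ℝ (Fin p) =>
      (1 - 2 * c * ⟪-r.1, r.2⟫_ℝ - c * ‖r.2‖ ^ 2) • (-r.1 : EuclideanSpace ℝ (Fin p)) +
        (1 + c * ‖(-r.1 : EuclideanSpace ℝ (Fin p))‖ ^ 2) • r.2 :=
    (((continuous_const.sub (continuous_const.mul hinner)).sub
      (continuous_const.mul hn2)).smul continuous_fst.neg).add
      ((continuous_const.add (continuous_const.mul hn1)).smul continuous_snd)
  have hm : ContinuousAt (fun r : EuclideanSpace ℝ (Fin p) × EuclideanSpace ℝ (Fin p) =>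
      mobiusAdd c (-r.1) r.2) q := by
    unfold mobiusAdd
    exact (hd.continuousAt.inv₀ hd0.ne').smul hu.continuousAt
  have hz : ContinuousAt (fun r : EuclideanSpace ℝ (Fin p) × EuclideanSpace ℝ (Fin p) =>
      Real.sqrt (-c) * ‖mobiusAdd c (-r.1) r.2‖) q := continuousAt_const.mul hm.norm
  have hz1 : Real.sqrt (-c) * ‖mobiusAdd c (-q.1) q.2‖ < 1 :=
    sqrt_norm_lt_one hc (mobius_mem_ball hc hxm hy)
  have hz0 : 0 ≤ Real.sqrt (-c) * ‖mobiusAdd c (-q.1) q.2‖ :=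
    mul_nonneg (Real.sqrt_nonneg _) (norm_nonneg _)
  have hat : ContinuousAt artanh (Real.sqrt (-c) * ‖mobiusAdd c (-q.1) q.2‖) := by
    unfold artanh
    set z₀ := Real.sqrt (-c) * ‖mobiusAdd c (-q.1) q.2‖
    have h1 : (1:ℝ) - z₀ ≠ 0 := by
      have : (0:ℝ) < 1 - z₀ := by linarith
      exact this.ne'
    have h2 : (1 + z₀) / (1 - z₀) ≠ 0 := by
      have : (0:ℝ) < (1 + z₀) / (1 - z₀) := div_pos (by linarith) (by linarith)
      exact this.ne'
    exact continuousAt_const.mul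
      (((continuousAt_const.add continuousAt_id).div
        (continuousAt_const.sub continuousAt_id) h1).log h2)
  have hdH : ContinuousAt (fun r : EuclideanSpace ℝ (Fin p) × EuclideanSpace ℝ (Fin p) =>
      dH c r.1 r.2) q := by
    unfold dH
    have hcomp : ContinuousAt (fun r : EuclideanSpace ℝ (Fin p) × EuclideanSpace ℝ (Fin p) =>
        artanh (Real.sqrt (-c) * ‖mobiusAdd c (-r.1) r.2‖)) q :=
      ContinuousAt.comp (g := artanh)
        (f := fun r : EuclideanSpace ℝ (Fin p) × EuclideanSpace ℝ (Fin p) =>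
          Real.sqrt (-c) * ‖mobiusAdd c (-r.1) r.2‖) hat hz
    exact continuousAt_const.mul hcomp
  have : ContinuousAt (fun r : EuclideanSpace ℝ (Fin p) × EuclideanSpace ℝ (Fin p) =>
      kernelK c σ r.1 r.2) q := by
    unfold kernelK
    exact Real.continuous_exp.continuousAt.comp
      ((hdH.pow 2).neg.div continuousAt_const (by positivity : (0:ℝ) < 2 * σ ^ 2).ne')
  exact this

end lems4

section lems5
variable {p : ℕ} {c : ℝ}

lemma volH_compact_lt_top (hc : c < 0) {K : Set (EuclideanSpace ℝ (Fin p))}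
    (hK : IsCompact K) (hKb : K ⊆ Dball c p) : volH c p K < ⊤ := by
  rcases K.eq_empty_or_nonempty with h | hne
  · simp [volH, h]
  have hdens : ContinuousOn (fun y : EuclideanSpace ℝ (Fin p) =>
      (2 / (1 - (-c) * ‖y‖ ^ 2)) ^ p) K := by
    apply ContinuousOn.pow
    apply ContinuousOn.div continuousOn_const
    · exact (continuous_const.sub (continuous_const.mul (continuous_norm.pow 2))).continuousOn
    · intro y hy
      have : -c * ‖y‖ ^ 2 < 1 := hKb hy
      have h0 : (0:ℝ) < 1 - (-c) * ‖y‖ ^ 2 := by linarith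
      exact h0.ne'
  obtain ⟨y₀, hy₀K, hy₀'⟩ := hK.exists_isMaxOn hne hdens
  have hy₀ : ∀ y ∈ K, (2 / (1 - (-c) * ‖y‖ ^ 2)) ^ p ≤ (2 / (1 - (-c) * ‖y₀‖ ^ 2)) ^ p :=
    fun y hy => hy₀' hy
  set C := (2 / (1 - (-c) * ‖y₀‖ ^ 2)) ^ p with hC
  have h1 : volH c p K = ∫⁻ y in K, ENNReal.ofReal ((2 / (1 - (-c) * ‖y‖ ^ 2)) ^ p) ∂volume := by
    rw [volH, withDensity_apply _ hK.measurableSet]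
  rw [h1]
  calc ∫⁻ y in K, ENNReal.ofReal ((2 / (1 - (-c) * ‖y‖ ^ 2)) ^ p) ∂volume
      ≤ ∫⁻ _ in K, ENNReal.ofReal C ∂volume := by
        apply setLIntegral_mono measurable_const
        intro y hy
        exact ENNReal.ofReal_le_ofReal (hy₀ y hy)
    _ = ENNReal.ofReal C * volume K := by rw [setLIntegral_const]
    _ < ⊤ := ENNReal.mul_lt_top ENNReal.ofReal_lt_top hK.measure_lt_top

lemma integrable_dominated (hc : c < 0) {K : Set (EuclideanSpace ℝ (Fin p))}
    (hK : IsCompact K) (hKb : K ⊆ Dball c p) {M : ℝ} (hM : 0 ≤ M)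
    {g : EuclideanSpace ℝ (Fin p) → ℝ} (hgm : AEStronglyMeasurable g (volH c p))
    (hbound : ∀ y, ‖g y‖ ≤ K.indicator (fun _ => M) y) :
    Integrable g (volH c p) := by
  apply Integrable.mono' (g := K.indicator fun _ => M) ?_ hgm (ae_of_all _ hbound)
  rw [integrable_indicator_iff hK.measurableSet]
  exact integrableOn_const (volH_compact_lt_top hc hK hKb).ne

end lems5

section lems6
open ProbabilityTheory
variable {p : ℕ} {c : ℝ}

lemma slln_point (hc : c < 0) {σ : ℝ} (hσ : 0 < σ)
    {Ω : Type*} [MeasureSpace Ω] [IsProbabilityMeasure (ℙ : Measure Ω)]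
    (X : ℕ → Ω → EuclideanSpace ℝ (Fin p))
    (hXmeas : ∀ i, Measurable (X i))
    (hindep : ProbabilityTheory.iIndepFun X (ℙ : Measure Ω))
    (f : EuclideanSpace ℝ (Fin p) → ℝ)
    (hf_cont : Continuous f) (hf_nonneg : ∀ x, 0 ≤ f x)
    (hlaw : ∀ i, Measure.map (X i) (ℙ : Measure Ω) =
      (volH c p).withDensity fun y => ENNReal.ofReal (f y))
    (x : EuclideanSpace ℝ (Fin p)) :
    ∀ᵐ ω ∂(ℙ : Measure Ω),
      Filter.Tendsto (fun N : ℕ => empKDE c σ X N ω x) Filter.atTop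
        (nhds (popSmooth c σ f x)) := by
  have hkm : Measurable (fun y => kernelK c σ x y) := measurable_kernelK σ x
  set Y : ℕ → Ω → ℝ := fun i ω => kernelK c σ x (X i ω) with hY
  have hYmeas : ∀ i, Measurable (Y i) := fun i => hkm.comp (hXmeas i)
  have hint : Integrable (Y 0) (ℙ : Measure Ω) := by
    apply Integrable.mono' (integrable_const (1:ℝ)) (hYmeas 0).aestronglyMeasurable
    filter_upwards with ω
    rw [Real.norm_eq_abs, abs_of_nonneg (kernelK_nonneg σ _ _)]
    exact kernelK_le_one hσ _ _
  have hpind : Pairwise (fun i j => IndepFun (Y i) (Y j) (ℙ : Measure Ω)) := by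
    intro i j hij
    exact (hindep.indepFun hij).comp hkm hkm
  have hident : ∀ i, IdentDistrib (Y i) (Y 0) (ℙ : Measure Ω) (ℙ : Measure Ω) := by
    intro i
    have hXid : IdentDistrib (X i) (X 0) (ℙ : Measure Ω) (ℙ : Measure Ω) :=
      ⟨(hXmeas i).aemeasurable, (hXmeas 0).aemeasurable, by rw [hlaw i, hlaw 0]⟩
    exact hXid.comp hkm
  have hEY : (ℙ : Measure Ω)[Y 0] = popSmooth c σ f x := by
    have h1 : (ℙ : Measure Ω)[Y 0] = ∫ y, kernelK c σ x y ∂(Measure.map (X 0) (ℙ : Measure Ω)) := by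
      rw [integral_map (hXmeas 0).aemeasurable hkm.aestronglyMeasurable]
    have hden : (fun y => ENNReal.ofReal (f y)) =
        (fun y : EuclideanSpace ℝ (Fin p) => ((Real.toNNReal (f y) : NNReal) : ENNReal)) := rfl
    rw [h1, hlaw 0, hden,
      integral_withDensity_eq_integral_smul hf_cont.measurable.real_toNNReal _]
    rw [popSmooth]
    congr 1
    funext y
    rw [NNReal.smul_def, Real.coe_toNNReal _ (hf_nonneg y), smul_eq_mul, mul_comm]
  have := strong_law_ae_real Y hint hpind hident
  filter_upwards [this] with ω hω
  rw [hEY] at hω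
  have : (fun N : ℕ => empKDE c σ X N ω x) =
      fun n : ℕ => (∑ i ∈ Finset.range n, Y i ω) / n := by
    funext n
    rw [empKDE]; field_simp; rfl
  rw [this]
  exact hω

end lems6

section lems7
variable {p : ℕ} {c : ℝ}

lemma conf_bound (hc : c < 0) {x y : EuclideanSpace ℝ (Fin p)}
    (hx : x ∈ Dball c p) (hy : y ∈ Dball c p) {γ : ℝ} (hγ0 : 0 ≤ γ) (hγ1 : γ < 1)
    (hyγ : Real.sqrt (-c) * ‖y‖ ≤ γ) :
    (1 + c * ‖mobiusAdd c (-x) y‖ ^ 2) * (1 - γ) ^ 2 ≤ 1 + c * ‖x‖ ^ 2 := by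
  have hxm : -x ∈ Dball c p := by show -c * ‖-x‖ ^ 2 < 1; rw [norm_neg]; exact hx
  have hx' : -c * ‖x‖ ^ 2 < 1 := hx
  have hy' : -c * ‖y‖ ^ 2 < 1 := hy
  have hD := denom_pos hc hxm hy
  have hEq := mobius_norm_sq c (-x) y hD.ne'
  rw [norm_neg] at hEq hD
  -- D ≥ (1 + c ‖x‖‖y‖)^2 and 1 + c‖x‖‖y‖ ≥ 1 - γ ≥ 0
  have habs := abs_le.1 (abs_real_inner_le_norm (-x) y)
  rw [norm_neg] at habs
  have hsx : Real.sqrt (-c) * ‖x‖ < 1 := sqrt_norm_lt_one hc hx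
  have hsx0 : 0 ≤ Real.sqrt (-c) * ‖x‖ := mul_nonneg (Real.sqrt_nonneg _) (norm_nonneg _)
  have hsy0 : 0 ≤ Real.sqrt (-c) * ‖y‖ := mul_nonneg (Real.sqrt_nonneg _) (norm_nonneg _)
  have hprod : -c * (‖x‖ * ‖y‖) ≤ γ := by
    have h1 : (Real.sqrt (-c) * ‖x‖) * (Real.sqrt (-c) * ‖y‖) = -c * (‖x‖ * ‖y‖) := by
      have h2 := Real.sq_sqrt (by linarith : (0:ℝ) ≤ -c)
      nlinarith [h2]
    calc -c * (‖x‖ * ‖y‖) = (Real.sqrt (-c) * ‖x‖) * (Real.sqrt (-c) * ‖y‖) := h1.symm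
      _ ≤ 1 * γ := by
          apply mul_le_mul hsx.le hyγ hsy0 zero_le_one
      _ = γ := one_mul γ
  have hcxy : 1 - γ ≤ 1 + c * (‖x‖ * ‖y‖) := by linarith
  have hDge : (1 + c * (‖x‖ * ‖y‖)) ^ 2 ≤
      1 - 2 * c * ⟪-x, y⟫_ℝ + c ^ 2 * ‖x‖ ^ 2 * ‖y‖ ^ 2 := by
    nlinarith [mul_nonneg (neg_nonneg.2 hc.le)
      (by linarith [habs.1] : (0:ℝ) ≤ ⟪-x, y⟫_ℝ + ‖x‖ * ‖y‖)]
  have hDge2 : (1 - γ) ^ 2 ≤ 1 - 2 * c * ⟪-x, y⟫_ℝ + c ^ 2 * ‖x‖ ^ 2 * ‖y‖ ^ 2 := by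
    calc (1 - γ) ^ 2 ≤ (1 + c * (‖x‖ * ‖y‖)) ^ 2 := by
          apply pow_le_pow_left₀ (by linarith) hcxy
      _ ≤ _ := hDge
  have hx0 : 0 ≤ 1 + c * ‖x‖ ^ 2 := by linarith
  have hy1 : 1 + c * ‖y‖ ^ 2 ≤ 1 := by nlinarith [sq_nonneg ‖y‖, mul_nonneg (neg_nonneg.2 hc.le) (sq_nonneg ‖y‖)]
  have hy0 : 0 ≤ 1 + c * ‖y‖ ^ 2 := by linarith
  rw [hEq]
  rw [div_mul_eq_mul_div, div_le_iff₀ hD]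
  calc (1 + c * ‖x‖ ^ 2) * (1 + c * ‖y‖ ^ 2) * (1 - γ) ^ 2
      ≤ (1 + c * ‖x‖ ^ 2) * 1 * (1 - γ) ^ 2 := by
        apply mul_le_mul_of_nonneg_right (mul_le_mul_of_nonneg_left hy1 hx0) (sq_nonneg _)
    _ = (1 + c * ‖x‖ ^ 2) * (1 - γ) ^ 2 := by ring
    _ ≤ (1 + c * ‖x‖ ^ 2) * (1 - 2 * c * ⟪-x, y⟫_ℝ + c ^ 2 * ‖x‖ ^ 2 * ‖y‖ ^ 2) :=
        mul_le_mul_of_nonneg_left hDge2 hx0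

end lems7

set_option maxHeartbeats 1000000 in
/-- Uniform a.s. consistency of the hyperbolic KDE.  Fix `c < 0` and
`σ > 0`.  Let `X₁, X₂, …` be i.i.d. random points of `D_c^p` whose common law has a
continuous bounded density `f` with respect to the hyperbolic volume `vol_H`, supported
in a compact subset of `D_c^p`.  Then
`sup_{x ∈ D_c^p} |f̂_σ^N(x) − f_σ(x)| → 0` almost surely as `N → ∞`, where
`f̂_σ^N(x) = (1/N) Σ_{i<N} K_σ(x, X_i)` and `f_σ(x) = ∫ K_σ(x,y) f(y) dvol_H(y)`. -/
theorem hyperbolic_kde_uniform_consistency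
    (p : ℕ) (c : ℝ) (hc : c < 0) (σ : ℝ) (hσ : 0 < σ)
    {Ω : Type*} [MeasureSpace Ω] [IsProbabilityMeasure (ℙ : Measure Ω)]
    (X : ℕ → Ω → EuclideanSpace ℝ (Fin p))
    (hXmeas : ∀ i, Measurable (X i))
    (hindep : ProbabilityTheory.iIndepFun X (ℙ : Measure Ω))
    (f : EuclideanSpace ℝ (Fin p) → ℝ)
    (hf_cont : Continuous f)
    (hf_nonneg : ∀ x, 0 ≤ f x)
    (hf_bdd : ∃ M : ℝ, ∀ x, f x ≤ M)
    (hf_supp : ∃ K : Set (EuclideanSpace ℝ (Fin p)),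
      IsCompact K ∧ K ⊆ Dball c p ∧ tsupport f ⊆ K)
    (hlaw : ∀ i, Measure.map (X i) (ℙ : Measure Ω) = (volH c p).withDensity fun y => ENNReal.ofReal (f y)) :
    ∀ᵐ ω ∂(ℙ : Measure Ω),
      Filter.Tendsto
        (fun N : ℕ =>
          ⨆ x : Dball c p, |empKDE c σ X N ω (x : EuclideanSpace ℝ (Fin p)) -
            popSmooth c σ f (x : EuclideanSpace ℝ (Fin p))|)
        Filter.atTop (nhds 0) := by
  obtain ⟨M, hM⟩ := hf_bdd
  obtain ⟨K, hKcomp, hKball, hKsupp⟩ := hf_supp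
  have hκ : (0:ℝ) < -c := by linarith
  have hs : 0 < Real.sqrt (-c) := Real.sqrt_pos.2 hκ
  have hM0 : 0 ≤ M := le_trans (hf_nonneg 0) (hM 0)
  have h0mem : (0 : EuclideanSpace ℝ (Fin p)) ∈ Dball c p := by
    show -c * ‖(0 : EuclideanSpace ℝ (Fin p))‖ ^ 2 < 1
    rw [norm_zero]; norm_num
  haveI : Nonempty (Dball c p) := ⟨⟨0, h0mem⟩⟩
  have hf_zero : ∀ y ∉ K, f y = 0 := fun y hy =>
    image_eq_zero_of_notMem_tsupport (fun h => hy (hKsupp h))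
  have hf_int : Integrable f (volH c p) := by
    apply integrable_dominated hc hKcomp hKball hM0 hf_cont.aestronglyMeasurable
    intro y
    by_cases hy : y ∈ K
    · rw [Set.indicator_of_mem hy, Real.norm_eq_abs, abs_of_nonneg (hf_nonneg y)]
      exact hM y
    · rw [Set.indicator_of_notMem hy, hf_zero y hy, norm_zero]
  haveI hprob : IsProbabilityMeasure (Measure.map (X 0) (ℙ : Measure Ω)) :=
    Measure.isProbabilityMeasure_map (hXmeas 0).aemeasurable
  have hmass : ∫ y, f y ∂(volH c p) = 1 := by
    have h1 : (Measure.map (X 0) (ℙ : Measure Ω)) Set.univ = 1 := measure_univ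
    rw [hlaw 0, withDensity_apply _ MeasurableSet.univ, Measure.restrict_univ] at h1
    rw [integral_eq_lintegral_of_nonneg_ae (ae_of_all _ hf_nonneg)
      hf_cont.aestronglyMeasurable, h1]
    simp
  have hpop_int : ∀ x, Integrable (fun y => kernelK c σ x y * f y) (volH c p) := by
    intro x
    apply integrable_dominated hc hKcomp hKball hM0
      (((measurable_kernelK σ x).mul hf_cont.measurable).aestronglyMeasurable)
    intro y
    by_cases hy : y ∈ K
    · rw [Set.indicator_of_mem hy, Real.norm_eq_abs, Pi.mul_apply,
        abs_of_nonneg (mul_nonneg (kernelK_nonneg σ x y) (hf_nonneg y))]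
      calc kernelK c σ x y * f y ≤ 1 * f y :=
            mul_le_mul_of_nonneg_right (kernelK_le_one hσ x y) (hf_nonneg y)
        _ = f y := one_mul _
        _ ≤ M := hM y
    · rw [Set.indicator_of_notMem hy, Pi.mul_apply, hf_zero y hy, mul_zero, norm_zero]
  have hpop_nonneg : ∀ x, 0 ≤ popSmooth c σ f x := fun x =>
    integral_nonneg fun y => mul_nonneg (kernelK_nonneg σ x y) (hf_nonneg y)
  have hpop_le : ∀ (x : EuclideanSpace ℝ (Fin p)) (b : ℝ), 0 ≤ b →
      (∀ y ∈ K, kernelK c σ x y ≤ b) → popSmooth c σ f x ≤ b := by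
    intro x b hb0 hb
    have hpt : ∀ y, kernelK c σ x y * f y ≤ b * f y := by
      intro y
      by_cases hy : y ∈ K
      · exact mul_le_mul_of_nonneg_right (hb y hy) (hf_nonneg y)
      · rw [hf_zero y hy, mul_zero, mul_zero]
    calc popSmooth c σ f x ≤ ∫ y, b * f y ∂(volH c p) :=
          integral_mono (hpop_int x) (hf_int.const_mul b) hpt
      _ = b * ∫ y, f y ∂(volH c p) := integral_const_mul b f
      _ = b := by rw [hmass, mul_one]
  have hpop_le_one : ∀ x, popSmooth c σ f x ≤ 1 := fun x =>
    hpop_le x 1 zero_le_one fun y _ => kernelK_le_one hσ x y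
  have hpop_diff : ∀ (x x' : EuclideanSpace ℝ (Fin p)) (η : ℝ), 0 ≤ η →
      (∀ y ∈ K, |kernelK c σ x y - kernelK c σ x' y| ≤ η) →
      |popSmooth c σ f x - popSmooth c σ f x'| ≤ η := by
    intro x x' η hη hKd
    rw [popSmooth, popSmooth, ← integral_sub (hpop_int x) (hpop_int x')]
    have hpt : ∀ y, |kernelK c σ x y * f y - kernelK c σ x' y * f y| ≤ η * f y := by
      intro y
      by_cases hy : y ∈ K
      · rw [← sub_mul, abs_mul, abs_of_nonneg (hf_nonneg y)]
        exact mul_le_mul_of_nonneg_right (hKd y hy) (hf_nonneg y)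
      · rw [hf_zero y hy, mul_zero, mul_zero, sub_zero, abs_zero, mul_zero]
    calc |∫ y, (kernelK c σ x y * f y - kernelK c σ x' y * f y) ∂(volH c p)|
        ≤ ∫ y, |kernelK c σ x y * f y - kernelK c σ x' y * f y| ∂(volH c p) :=
          by
            simpa [Real.norm_eq_abs] using
              norm_integral_le_integral_norm (μ := volH c p)
                (fun y => kernelK c σ x y * f y - kernelK c σ x' y * f y)
      _ ≤ ∫ y, η * f y ∂(volH c p) :=
          integral_mono ((hpop_int x).sub (hpop_int x')).abs (hf_int.const_mul η) hpt
      _ = η * ∫ y, f y ∂(volH c p) := integral_const_mul η f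
      _ = η := by rw [hmass, mul_one]
  -- empirical bounds (deterministic)
  have hemp_le : ∀ N (ω : Ω) (x : EuclideanSpace ℝ (Fin p)) (b : ℝ), 0 ≤ b →
      (∀ i, i < N → kernelK c σ x (X i ω) ≤ b) → empKDE c σ X N ω x ≤ b := by
    intro N ω x b hb0 hb
    rcases Nat.eq_zero_or_pos N with hN | hN
    · rw [empKDE, hN]; simp [hb0]
    rw [empKDE]
    have hsum : ∑ i ∈ Finset.range N, kernelK c σ x (X i ω) ≤ N * b := by
      calc ∑ i ∈ Finset.range N, kernelK c σ x (X i ω) ≤ ∑ _i ∈ Finset.range N, b :=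
            Finset.sum_le_sum fun i hi => hb i (Finset.mem_range.1 hi)
        _ = N * b := by rw [Finset.sum_const, Finset.card_range, nsmul_eq_mul]
    have hNpos : (0:ℝ) < N := Nat.cast_pos.2 hN
    calc (1 / (N:ℝ)) * ∑ i ∈ Finset.range N, kernelK c σ x (X i ω)
        ≤ (1 / (N:ℝ)) * ((N:ℝ) * b) := by
          apply mul_le_mul_of_nonneg_left hsum (by positivity)
      _ = b := by field_simp
  have hemp_nonneg : ∀ N (ω : Ω) (x : EuclideanSpace ℝ (Fin p)), 0 ≤ empKDE c σ X N ω x := by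
    intro N ω x
    apply mul_nonneg (by positivity)
    exact Finset.sum_nonneg fun i _ => kernelK_nonneg σ x (X i ω)
  have hbdd : ∀ N (ω : Ω), BddAbove (Set.range fun x : Dball c p =>
      |empKDE c σ X N ω (x : EuclideanSpace ℝ (Fin p)) -
        popSmooth c σ f (x : EuclideanSpace ℝ (Fin p))|) := by
    intro N ω
    refine ⟨2, ?_⟩
    rintro v ⟨x, rfl⟩
    have h1 : empKDE c σ X N ω (x : EuclideanSpace ℝ (Fin p)) ≤ 1 :=
      hemp_le N ω _ 1 zero_le_one fun i _ => kernelK_le_one hσ _ _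
    have h2 := hemp_nonneg N ω (x : EuclideanSpace ℝ (Fin p))
    have h3 := hpop_nonneg (x : EuclideanSpace ℝ (Fin p))
    have h4 := hpop_le_one (x : EuclideanSpace ℝ (Fin p))
    rw [abs_le]; constructor <;> linarith
  -- K is nonempty
  have hKne : K.Nonempty := by
    rcases K.eq_empty_or_nonempty with h | h
    · exfalso
      have hz : ∀ y, f y = 0 := fun y => hf_zero y (by rw [h]; exact Set.notMem_empty y)
      rw [show f = fun _ => (0:ℝ) from funext hz] at hmass
      simp at hmass
    · exact h
  have hcontβ : ContinuousOn (fun y : EuclideanSpace ℝ (Fin p) => -c * ‖y‖ ^ 2) K :=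
    (continuous_const.mul (continuous_norm.pow 2)).continuousOn
  obtain ⟨y₀, hy₀K, hy₀max'⟩ := hKcomp.exists_isMaxOn hKne hcontβ
  set β := -c * ‖y₀‖ ^ 2 with hβdef
  have hβ0 : 0 ≤ β := mul_nonneg hκ.le (sq_nonneg _)
  have hβ1 : β < 1 := hKball hy₀K
  have hymax : ∀ y ∈ K, -c * ‖y‖ ^ 2 ≤ β := fun y hy => hy₀max' hy
  set γ := Real.sqrt β with hγdef
  have hγ0 : 0 ≤ γ := Real.sqrt_nonneg β
  have hγ1 : γ < 1 := by nlinarith [Real.sq_sqrt hβ0, Real.sqrt_nonneg β]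
  have hyγ : ∀ y ∈ K, Real.sqrt (-c) * ‖y‖ ≤ γ := by
    intro y hy
    have h1 : (Real.sqrt (-c) * ‖y‖) ^ 2 = -c * ‖y‖ ^ 2 := by
      rw [mul_pow, Real.sq_sqrt hκ.le]
    nlinarith [Real.sq_sqrt hβ0, mul_nonneg (Real.sqrt_nonneg (-c)) (norm_nonneg y),
      hymax y hy]
  -- main epsilon lemma
  have main : ∀ ε : ℝ, 0 < ε → ∀ᵐ ω ∂(ℙ : Measure Ω), ∀ᶠ N in atTop,
      (⨆ x : Dball c p, |empKDE c σ X N ω (x : EuclideanSpace ℝ (Fin p)) -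
        popSmooth c σ f (x : EuclideanSpace ℝ (Fin p))|) ≤ ε := by
    intro ε hε
    set ε4 := ε / 4 with hε4def
    have hε4 : 0 < ε4 := by positivity
    set R₀ := Real.sqrt (2 * σ ^ 2 * (1 + |Real.log ε4|)) with hR₀def
    have hR₀0 : 0 ≤ R₀ := Real.sqrt_nonneg _
    have hexpR : Real.exp (-R₀ ^ 2 / (2 * σ ^ 2)) ≤ ε4 := by
      have h1 : R₀ ^ 2 = 2 * σ ^ 2 * (1 + |Real.log ε4|) := Real.sq_sqrt (by positivity)
      have h2 : -R₀ ^ 2 / (2 * σ ^ 2) ≤ Real.log ε4 := by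
        have h3 : -R₀ ^ 2 / (2 * σ ^ 2) = -(1 + |Real.log ε4|) := by
          rw [h1]; field_simp
        rw [h3]
        have := neg_abs_le (Real.log ε4)
        linarith
      calc Real.exp (-R₀ ^ 2 / (2 * σ ^ 2)) ≤ Real.exp (Real.log ε4) := Real.exp_le_exp.2 h2
        _ = ε4 := Real.exp_log hε4
    set u := (1 - γ) ^ 2 * Real.exp (-(Real.sqrt (-c) * R₀)) with hudef
    have hu0 : 0 < u := mul_pos (pow_pos (by linarith) 2) (Real.exp_pos _)
    set C := {x : EuclideanSpace ℝ (Fin p) | -c * ‖x‖ ^ 2 ≤ 1 - min u 1} with hCdef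
    have humin0 : 0 < min u 1 := lt_min hu0 one_pos
    have hCball : C ⊆ Dball c p := by
      intro x hx
      have h1 : -c * ‖x‖ ^ 2 ≤ 1 - min u 1 := hx
      show -c * ‖x‖ ^ 2 < 1
      linarith
    have hCcomp : IsCompact C := by
      apply Metric.isCompact_of_isClosed_isBounded
      · exact isClosed_le (continuous_const.mul (continuous_norm.pow 2)) continuous_const
      · apply Bornology.IsBounded.subset
          (Metric.isBounded_closedBall (x := (0 : EuclideanSpace ℝ (Fin p)))
            (r := Real.sqrt (1 / (-c))))
        intro x hx
        rw [Metric.mem_closedBall, dist_zero_right]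
        have h1 : -c * ‖x‖ ^ 2 ≤ 1 - min u 1 := hx
        have hx2 : ‖x‖ ^ 2 ≤ 1 / (-c) := by
          rw [le_div_iff₀ hκ]; nlinarith
        calc ‖x‖ = Real.sqrt (‖x‖ ^ 2) := (Real.sqrt_sq (norm_nonneg x)).symm
          _ ≤ Real.sqrt (1 / (-c)) := Real.sqrt_le_sqrt hx2
    -- far bound
    have hfar : ∀ x ∈ Dball c p, x ∉ C → ∀ y ∈ K, kernelK c σ x y ≤ ε4 := by
      intro x hx hxC y hyK
      have hyb : y ∈ Dball c p := hKball hyK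
      have hxm : -x ∈ Dball c p := by show -c * ‖-x‖ ^ 2 < 1; rw [norm_neg]; exact hx
      have hw : 1 + c * ‖x‖ ^ 2 < min u 1 := by
        have h' : 1 - min u 1 < -c * ‖x‖ ^ 2 := lt_of_not_ge hxC
        linarith
      have hm := conf_bound hc hx hyb hγ0 hγ1 (hyγ y hyK)
      have hmball : mobiusAdd c (-x) y ∈ Dball c p := mobius_mem_ball hc hxm hyb
      have hmpos : 0 < 1 + c * ‖mobiusAdd c (-x) y‖ ^ 2 := by
        have h1 : -c * ‖mobiusAdd c (-x) y‖ ^ 2 < 1 := hmball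
        linarith
      have hγ2 : 0 < (1 - γ) ^ 2 := pow_pos (by linarith) 2
      have hkey : 1 + c * ‖mobiusAdd c (-x) y‖ ^ 2 <
          Real.exp (-(Real.sqrt (-c) * R₀)) := by
        have h2 : 1 + c * ‖x‖ ^ 2 < u := lt_of_lt_of_le hw (min_le_left _ _)
        rw [hudef] at h2
        nlinarith
      have hdHge : R₀ ≤ dH c x y := by
        have hlow := dH_lower hc hx hyb
        have h5 : Real.log (1 + c * ‖mobiusAdd c (-x) y‖ ^ 2) <
            -(Real.sqrt (-c) * R₀) := by
          calc Real.log (1 + c * ‖mobiusAdd c (-x) y‖ ^ 2)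
              < Real.log (Real.exp (-(Real.sqrt (-c) * R₀))) := Real.log_lt_log hmpos hkey
            _ = -(Real.sqrt (-c) * R₀) := Real.log_exp _
        have h6 : Real.sqrt (-c) * R₀ ≤
            Real.log (1 / (1 + c * ‖mobiusAdd c (-x) y‖ ^ 2)) := by
          rw [one_div, Real.log_inv]
          linarith
        have h7 : R₀ ≤ (1 / Real.sqrt (-c)) *
            Real.log (1 / (1 + c * ‖mobiusAdd c (-x) y‖ ^ 2)) := by
          have h8 : (1 / Real.sqrt (-c)) * (Real.sqrt (-c) * R₀) = R₀ := by
            field_simp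
          calc R₀ = (1 / Real.sqrt (-c)) * (Real.sqrt (-c) * R₀) := h8.symm
            _ ≤ (1 / Real.sqrt (-c)) * Real.log (1 / (1 + c * ‖mobiusAdd c (-x) y‖ ^ 2)) :=
              mul_le_mul_of_nonneg_left h6 (by positivity)
        exact le_trans h7 hlow
      rw [kernelK]
      calc Real.exp (-dH c x y ^ 2 / (2 * σ ^ 2)) ≤ Real.exp (-R₀ ^ 2 / (2 * σ ^ 2)) := by
            apply Real.exp_le_exp.2
            apply div_le_div_of_nonneg_right ?_ (by positivity : (0:ℝ) ≤ 2 * σ ^ 2)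
            nlinarith [pow_le_pow_left₀ hR₀0 hdHge 2]
        _ ≤ ε4 := hexpR
    -- uniform continuity on C ×ˢ K
    have hCK : IsCompact (C ×ˢ K) := hCcomp.prod hKcomp
    have hCKsub : (C ×ˢ K) ⊆ Dball c p ×ˢ Dball c p := Set.prod_mono hCball hKball
    have hucont : UniformContinuousOn
        (fun q : EuclideanSpace ℝ (Fin p) × EuclideanSpace ℝ (Fin p) =>
          kernelK c σ q.1 q.2) (C ×ˢ K) :=
      hCK.uniformContinuousOn_of_continuous ((continuousOn_kernelK hc hσ).mono hCKsub)
    rw [Metric.uniformContinuousOn_iff_le] at hucont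
    obtain ⟨d, hd0, hd⟩ := hucont ε4 hε4
    -- finite net
    obtain ⟨T, hTsub, hTfin, hTcover⟩ := hCcomp.elim_finite_subcover_image
      (b := C) (c := fun j => Metric.ball j d)
      (fun j _ => Metric.isOpen_ball)
      (fun x hx => Set.mem_biUnion hx (Metric.mem_ball_self hd0))
    -- a.s. events
    have hAe1 : ∀ᵐ ω ∂(ℙ : Measure Ω), ∀ i, X i ω ∈ K := by
      rw [ae_all_iff]
      intro i
      have h0 : (Measure.map (X i) (ℙ : Measure Ω)) Kᶜ = 0 := by
        rw [hlaw i, withDensity_apply _ hKcomp.measurableSet.compl]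
        calc ∫⁻ y in Kᶜ, ENNReal.ofReal (f y) ∂(volH c p)
            = ∫⁻ _ in Kᶜ, 0 ∂(volH c p) := setLIntegral_congr_fun hKcomp.measurableSet.compl
              (fun y hy => by rw [hf_zero y hy, ENNReal.ofReal_zero])
          _ = 0 := lintegral_zero
      have h1 := Measure.map_apply (μ := (ℙ : Measure Ω)) (hXmeas i) hKcomp.measurableSet.compl
      rw [h0] at h1
      rw [ae_iff]
      exact h1.symm
    have hAe2 : ∀ᵐ ω ∂(ℙ : Measure Ω), ∀ x₀ ∈ T,
        Tendsto (fun N => empKDE c σ X N ω x₀) atTop (nhds (popSmooth c σ f x₀)) :=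
      (ae_ball_iff hTfin.countable).2 fun x₀ _ =>
        slln_point hc hσ X hXmeas hindep f hf_cont hf_nonneg hlaw x₀
    filter_upwards [hAe1, hAe2] with ω hωK hωT
    have hevT : ∀ᶠ N in atTop, ∀ x₀ ∈ T,
        |empKDE c σ X N ω x₀ - popSmooth c σ f x₀| ≤ ε4 := by
      rw [eventually_all_finite hTfin]
      intro x₀ hx₀
      have h1 : Tendsto (fun N => |empKDE c σ X N ω x₀ - popSmooth c σ f x₀|)
          atTop (nhds 0) := by
        have h2 := (hωT x₀ hx₀).sub (tendsto_const_nhds (x := popSmooth c σ f x₀))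
        rw [sub_self] at h2
        have h3 := h2.abs
        rwa [abs_zero] at h3
      exact h1.eventually_le_const hε4
    filter_upwards [hevT, eventually_ge_atTop 1] with N hNT hN1
    apply ciSup_le
    rintro ⟨x, hx⟩
    show |empKDE c σ X N ω x - popSmooth c σ f x| ≤ ε
    by_cases hxC : x ∈ C
    · obtain ⟨j, hjT, hxj⟩ := Set.mem_iUnion₂.1 (hTcover hxC)
      have hjC : j ∈ C := hTsub hjT
      have hdist : dist x j < d := Metric.mem_ball.1 hxj
      have hKd : ∀ y ∈ K, |kernelK c σ x y - kernelK c σ j y| ≤ ε4 := by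
        intro y hy
        have hdd : dist ((x, y) : EuclideanSpace ℝ (Fin p) × EuclideanSpace ℝ (Fin p))
            (j, y) < d := by
          rw [Prod.dist_eq]
          simp only [dist_self]
          rw [max_eq_left dist_nonneg]
          exact hdist
        have := hd (x, y) (Set.mk_mem_prod hxC hy) (j, y) (Set.mk_mem_prod hjC hy) hdd.le
        simpa [Real.dist_eq] using this
      have hN0 : (0:ℝ) < N := by exact_mod_cast Nat.lt_of_lt_of_le Nat.zero_lt_one hN1
      have hempd : |empKDE c σ X N ω x - empKDE c σ X N ω j| ≤ ε4 := by
        rw [empKDE, empKDE, ← mul_sub, ← Finset.sum_sub_distrib, abs_mul,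
          abs_of_nonneg (by positivity : (0:ℝ) ≤ 1 / (N:ℝ))]
        have hsum : |∑ i ∈ Finset.range N,
            (kernelK c σ x (X i ω) - kernelK c σ j (X i ω))| ≤ (N:ℝ) * ε4 := by
          calc |∑ i ∈ Finset.range N, (kernelK c σ x (X i ω) - kernelK c σ j (X i ω))|
              ≤ ∑ i ∈ Finset.range N, |kernelK c σ x (X i ω) - kernelK c σ j (X i ω)| :=
                Finset.abs_sum_le_sum_abs _ _
            _ ≤ ∑ _i ∈ Finset.range N, ε4 :=
                Finset.sum_le_sum fun i _ => hKd (X i ω) (hωK i)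
            _ = (N:ℝ) * ε4 := by rw [Finset.sum_const, Finset.card_range, nsmul_eq_mul]
        calc (1/(N:ℝ)) * |∑ i ∈ Finset.range N,
              (kernelK c σ x (X i ω) - kernelK c σ j (X i ω))|
            ≤ (1/(N:ℝ)) * ((N:ℝ) * ε4) := mul_le_mul_of_nonneg_left hsum (by positivity)
          _ = ε4 := by field_simp
      have hpopd := hpop_diff x j ε4 hε4.le hKd
      have hcen := hNT j hjT
      have htri : |empKDE c σ X N ω x - popSmooth c σ f x| ≤
          |empKDE c σ X N ω x - empKDE c σ X N ω j| +
          |empKDE c σ X N ω j - popSmooth c σ f j| +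
          |popSmooth c σ f j - popSmooth c σ f x| := by
        calc |empKDE c σ X N ω x - popSmooth c σ f x|
            ≤ |empKDE c σ X N ω x - popSmooth c σ f j| +
              |popSmooth c σ f j - popSmooth c σ f x| := abs_sub_le _ _ _
          _ ≤ (|empKDE c σ X N ω x - empKDE c σ X N ω j| +
              |empKDE c σ X N ω j - popSmooth c σ f j|) +
              |popSmooth c σ f j - popSmooth c σ f x| := by
                have := abs_sub_le (empKDE c σ X N ω x) (empKDE c σ X N ω j)
                  (popSmooth c σ f j)
                linarith
      have hpopd' : |popSmooth c σ f j - popSmooth c σ f x| ≤ ε4 := by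
        rw [abs_sub_comm]; exact hpopd
      rw [hε4def] at hempd hcen hpopd'
      linarith
    · have hemp : empKDE c σ X N ω x ≤ ε4 :=
        hemp_le N ω x ε4 hε4.le fun i _ => hfar x hx hxC (X i ω) (hωK i)
      have hpop : popSmooth c σ f x ≤ ε4 :=
        hpop_le x ε4 hε4.le fun y hy => hfar x hx hxC y hy
      have h1 := hemp_nonneg N ω x
      have h2 := hpop_nonneg x
      rw [abs_le, hε4def] at *
      constructor <;> linarith [hemp, hpop]
  -- conclude
  have hae : ∀ᵐ ω ∂(ℙ : Measure Ω), ∀ k : ℕ, ∀ᶠ N in atTop,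
      (⨆ x : Dball c p, |empKDE c σ X N ω (x : EuclideanSpace ℝ (Fin p)) -
        popSmooth c σ f (x : EuclideanSpace ℝ (Fin p))|) ≤ 1 / ((k:ℝ) + 1) :=
    ae_all_iff.2 fun k => main (1 / ((k:ℝ) + 1)) (by positivity)
  filter_upwards [hae] with ω hω
  rw [Metric.tendsto_atTop]
  intro ε hε
  obtain ⟨k, hk⟩ := exists_nat_one_div_lt hε
  obtain ⟨N₀, hN₀⟩ := eventually_atTop.1 (hω k)
  refine ⟨N₀, fun n hn => ?_⟩
  rw [Real.dist_eq, sub_zero]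
  have hsup_nonneg : 0 ≤ ⨆ x : Dball c p, |empKDE c σ X n ω (x : EuclideanSpace ℝ (Fin p)) -
      popSmooth c σ f (x : EuclideanSpace ℝ (Fin p))| :=
    le_trans (abs_nonneg _) (le_ciSup (hbdd n ω) ⟨0, h0mem⟩)
  rw [abs_of_nonneg hsup_nonneg]
  exact lt_of_le_of_lt (hN₀ n hn) hk
end
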